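/- Fix a mollifier ρ ∈ C_c^∞(ℝ) with ρ ≥ 0, supp ρ ⊆ [−1,1] and ∫ρ = 1; for ε ∈ (0,1) set σ(ε) = 1/|log ε|, ρ_{σ(ε)}(x) = σ(ε)^{-1} ρ(x/σ(ε)) and H_ε(x) = ∫_{−∞}^x ρ_{σ(ε)}(s) ds, and assume 0 < γ₋ ≤ H_ε(0) ≤ γ₊ < 1 for all ε ∈ (0,1). For α ∈ (−π, π] and ε ∈ (0,1) let γ_ε^α : ℝ → ℝ be the solution of (γ_ε^α)'(t) = H_ε(γ_ε^α(t) + π/2) − H_ε(γ_ε^α(t) − π/2) with γ_ε^α(0) = α. Then: (a) for every α ∈ (−π, π] and every t ∈ ℝ the limit Ψ(t, α) := lim_{ε→0⁺} γ_ε^α(t) exists, with Ψ(t, α) = max(−π/2, min(π/2, α + t)) if α ∈ [−π/2, π/2] and Ψ(t, α) = α otherwise; (b) for every α ∈ [−π/2, π/2] one has Ψ(π, Ψ(−π, α)) = π/2. In particular Ψ(π, Ψ(−π, α)) ≠ α = Ψ(π + (−π), α) for every α ∈ [−π/2, π/2), so the pointwise limit Ψ of the smooth flows fails the flow property Ψ_{s+t}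 = Ψ_s ∘ Ψ_t on a set of positive measure. -/

import Mathlib

open Set Filter Real

/-- The scaling function `σ(ε) = 1/|log ε|`. -/
noncomputable def sigmaScale (ε : ℝ) : ℝ := 1 / |Real.log ε|

/-- The regularized Heaviside function
`H_ε(x) = ∫_{-∞}^x σ(ε)⁻¹ ρ(s/σ(ε)) ds`. -/
noncomputable def Heps (ρ : ℝ → ℝ) (ε x : ℝ) : ℝ :=
  ∫ s in Set.Iic x, (sigmaScale ε)⁻¹ * ρ (s / sigmaScale ε)

/-- The limiting "flow" `Ψ` of the regularized circle ODE, in the angle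
variable: initial angles in `[-π/2, π/2]` are translated and clamped to
`[-π/2, π/2]`, all other angles stay fixed. -/
noncomputable def PsiLim (t α : ℝ) : ℝ :=
  if -(Real.pi / 2) ≤ α ∧ α ≤ Real.pi / 2 then
    max (-(Real.pi / 2)) (min (Real.pi / 2) (α + t))
  else α

section Helpers

open Topology MeasureTheory

set_option linter.unusedVariables false

section ODElemmas
variable {u g : ℝ → ℝ}

lemma cont_of_hd (hd : ∀ s, HasDerivAt u (g s) s) : Continuous u :=
  continuous_iff_continuousAt.2 fun s => (hd s).continuousAt

lemma lin_lower (hd : ∀ s, HasDerivAt u (g s) s) {a b c : ℝ} (hab : a ≤ b)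
    (hc : ∀ s ∈ Ioo a b, c ≤ g s) : u a + c * (b - a) ≤ u b := by
  have H : MonotoneOn (fun s => u s - c * s) (Icc a b) := by
    apply monotoneOn_of_deriv_nonneg (convex_Icc a b)
    · exact ((cont_of_hd hd).sub (continuous_const.mul continuous_id)).continuousOn
    · intro x hx
      exact ((hd x).sub ((hasDerivAt_id x).const_mul c)).differentiableAt.differentiableWithinAt
    · intro x hx
      rw [interior_Icc] at hx
      have : deriv (fun s => u s - c * s) x = g x - c * 1 :=
        ((hd x).sub ((hasDerivAt_id x).const_mul c)).deriv
      rw [this]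
      have := hc x hx
      linarith
  have := H (left_mem_Icc.2 hab) (right_mem_Icc.2 hab) hab
  simp only at this
  linarith

lemma lin_upper (hd : ∀ s, HasDerivAt u (g s) s) {a b c : ℝ} (hab : a ≤ b)
    (hc : ∀ s ∈ Ioo a b, g s ≤ c) : u b ≤ u a + c * (b - a) := by
  have H : AntitoneOn (fun s => u s - c * s) (Icc a b) := by
    apply antitoneOn_of_deriv_nonpos (convex_Icc a b)
    · exact ((cont_of_hd hd).sub (continuous_const.mul continuous_id)).continuousOn
    · intro x hx
      exact ((hd x).sub ((hasDerivAt_id x).const_mul c)).differentiableAt.differentiableWithinAt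
    · intro x hx
      rw [interior_Icc] at hx
      have : deriv (fun s => u s - c * s) x = g x - c * 1 :=
        ((hd x).sub ((hasDerivAt_id x).const_mul c)).deriv
      rw [this]
      have := hc x hx
      linarith
  have := H (left_mem_Icc.2 hab) (right_mem_Icc.2 hab) hab
  simp only at this
  linarith

lemma mono_of_hd (hd : ∀ s, HasDerivAt u (g s) s) (hg : ∀ s, 0 ≤ g s) : Monotone u := by
  intro a b hab
  have := lin_lower hd hab (c := 0) (fun s _ => hg s)
  linarith

/-- reflection : `-u (-·)` solves the reflected ODE. -/
lemma hd_reflect (hd : ∀ s, HasDerivAt u (g s) s) :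
    ∀ s, HasDerivAt (fun x => -u (-x)) (g (-s)) s := by
  intro s
  have h1 : HasDerivAt (fun x : ℝ => u (-x)) (g (-s) * (-1)) s :=
    (hd (-s)).comp s (hasDerivAt_neg s)
  have := h1.neg
  simp only [mul_neg, mul_one, neg_neg] at this
  exact this

/-- If the drift vanishes whenever `u ≤ b` and `u 0 < b`, then `u` is constant forward. -/
lemma stuckBelow (hd : ∀ s, HasDerivAt u (g s) s) {b : ℝ}
    (hg : ∀ s, u s ≤ b → g s = 0) (h0 : u 0 < b) {t : ℝ} (ht : 0 ≤ t) : u t = u 0 := by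
  have hcont := cont_of_hd hd
  have key : ∀ s ∈ Icc (0:ℝ) t, u s < b := by
    by_contra hK
    push_neg at hK
    obtain ⟨s₀, hs₀, hbs₀⟩ := hK
    set B := {s | s ∈ Icc (0:ℝ) t ∧ b ≤ u s} with hBdef
    have hBne : B.Nonempty := ⟨s₀, hs₀, hbs₀⟩
    have hBclosed : IsClosed B :=
      (isClosed_Icc.inter (isClosed_le continuous_const hcont))
    have hBbdd : BddBelow B := ⟨0, fun x hx => hx.1.1⟩
    set τ := sInf B with hτdef
    have hτB : τ ∈ B := hBclosed.csInf_mem hBne hBbdd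
    have hτpos : 0 < τ := by
      rcases lt_or_ge 0 τ with h | h
      · exact h
      · exfalso
        have : τ = 0 := le_antisymm h hτB.1.1
        rw [this] at hτB
        exact absurd hτB.2 (not_le.2 h0)
    have hzero : ∀ s ∈ Ioo (0:ℝ) τ, g s = 0 := by
      intro s hs
      apply hg
      by_contra hub
      push_neg at hub
      have : s ∈ B := ⟨⟨hs.1.le, hs.2.le.trans hτB.1.2⟩, hub.le⟩
      exact absurd (csInf_le hBbdd this) (not_le.2 hs.2)
    have h1 := lin_lower hd hτpos.le (c := 0) (fun s hs => (hzero s hs).ge)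
    have h2 := lin_upper hd hτpos.le (c := 0) (fun s hs => (hzero s hs).le)
    have : u τ = u 0 := by linarith
    have := hτB.2
    linarith
  have hzero : ∀ s ∈ Ioo (0:ℝ) t, g s = 0 := fun s hs =>
    hg s (key s ⟨hs.1.le, hs.2.le⟩).le
  have h1 := lin_lower hd ht (c := 0) (fun s hs => (hzero s hs).ge)
  have h2 := lin_upper hd ht (c := 0) (fun s hs => (hzero s hs).le)
  linarith

/-- If the drift vanishes whenever `u ≥ b` and `u 0 ≤ b`, then `u` stays `≤ b` forward. -/
lemma barrierUp (hd : ∀ s, HasDerivAt u (g s) s) {b : ℝ}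
    (hg : ∀ s, b ≤ u s → g s = 0) (h0 : u 0 ≤ b) {t : ℝ} (ht : 0 ≤ t) : u t ≤ b := by
  have hcont := cont_of_hd hd
  by_contra hK
  push_neg at hK
  set A := {s | s ∈ Icc (0:ℝ) t ∧ u s ≤ b} with hAdef
  have hAne : A.Nonempty := ⟨0, ⟨le_refl _, ht⟩, h0⟩
  have hAclosed : IsClosed A := isClosed_Icc.inter (isClosed_le hcont continuous_const)
  have hAbdd : BddAbove A := ⟨t, fun x hx => hx.1.2⟩
  set τ := sSup A with hτdef
  have hτA : τ ∈ A := hAclosed.csSup_mem hAne hAbdd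
  have hτt : τ ≤ t := hτA.1.2
  have hτ0 : 0 ≤ τ := hτA.1.1
  have hzero : ∀ s ∈ Ioo τ t, g s = 0 := by
    intro s hs
    apply hg
    by_contra hub
    push_neg at hub
    have : s ∈ A := ⟨⟨hτ0.trans hs.1.le, hs.2.le⟩, hub.le⟩
    exact absurd (le_csSup hAbdd this) (not_le.2 hs.1)
  have h2 := lin_upper hd hτt (c := 0) (fun s hs => (hzero s hs).le)
  have := hτA.2
  linarith

/-- Forward lower bound through a slow layer `[A, A+σ]` (speed ≥ c) and a
fast region `[A+σ, B-σ]` (speed = 1). -/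
lemma lemmaC (hd : ∀ s, HasDerivAt u (g s) s)
    {σ c A B : ℝ} (hσ : 0 < σ) (hc : 0 < c) (hc1 : c ≤ 1)
    (hg0 : ∀ s, 0 ≤ g s)
    (hlow : ∀ s, u s ∈ Icc A (A + σ) → c ≤ g s)
    (hmid : ∀ s, u s ∈ Icc (A + σ) (B - σ) → g s = 1)
    (h0 : u 0 ∈ Icc A (B - σ)) {t : ℝ} (ht : 0 ≤ t) :
    min (B - σ) (u 0 + t) - σ / c ≤ u t := by
  have hcont := cont_of_hd hd
  have hmono := mono_of_hd hd hg0
  have hσc : 0 ≤ σ / c := by positivity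
  by_cases hhit : ∃ s ∈ Icc (0:ℝ) t, B - σ ≤ u s
  · obtain ⟨s, hs, hBs⟩ := hhit
    have : u s ≤ u t := hmono hs.2
    have : min (B - σ) (u 0 + t) ≤ B - σ := min_le_left _ _
    linarith
  push_neg at hhit
  by_cases h2a : u t ≤ A + σ
  · -- stayed in the slow layer the whole time
    have hspeed : ∀ s ∈ Ioo (0:ℝ) t, c ≤ g s := by
      intro s hs
      apply hlow
      constructor
      · exact h0.1.trans (hmono hs.1.le)
      · exact (hmono hs.2.le).trans h2a
    have h1 := lin_lower hd ht hspeed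
    have htb : t ≤ σ / c := by
      have : c * t ≤ σ := by nlinarith [h0.1]
      rw [le_div_iff₀ hc]
      linarith [this]
    have : min (B - σ) (u 0 + t) ≤ u 0 + t := min_le_right _ _
    have hu0t : u 0 ≤ u t := hmono ht
    linarith
  push_neg at h2a
  -- u t > A + σ : there is a first time τ at which u reaches A + σ
  set S := {s | s ∈ Icc (0:ℝ) t ∧ A + σ ≤ u s} with hSdef
  have hSne : S.Nonempty := ⟨t, ⟨ht, le_refl _⟩, h2a.le⟩
  have hSclosed : IsClosed S := isClosed_Icc.inter (isClosed_le continuous_const hcont)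
  have hSbdd : BddBelow S := ⟨0, fun x hx => hx.1.1⟩
  set τ := sInf S with hτdef
  have hτS : τ ∈ S := hSclosed.csInf_mem hSne hSbdd
  have hτ0 : 0 ≤ τ := hτS.1.1
  have hτt : τ ≤ t := hτS.1.2
  have hbefore : ∀ s, 0 ≤ s → s < τ → u s < A + σ := by
    intro s hs0 hsτ
    by_contra hub
    push_neg at hub
    have : s ∈ S := ⟨⟨hs0, hsτ.le.trans hτt⟩, hub⟩
    exact absurd (csInf_le hSbdd this) (not_le.2 hsτ)
  -- u τ ≤ max (u 0) (A + σ)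
  have hτval : u τ ≤ max (u 0) (A + σ) := by
    rcases eq_or_lt_of_le hτ0 with h | h
    · rw [← h]; exact le_max_left _ _
    · refine le_trans ?_ (le_max_right _ _)
      have hne : (𝓝[Ico 0 τ] τ).NeBot := by
        rw [← mem_closure_iff_nhdsWithin_neBot, closure_Ico (ne_of_lt h)]
        exact ⟨hτ0, le_refl _⟩
      refine le_of_tendsto (hcont.continuousAt.continuousWithinAt (s := Ico 0 τ)) ?_
      filter_upwards [self_mem_nhdsWithin] with s hs
      exact (hbefore s hs.1 hs.2).le
  -- phase 1 : speed ≥ c on [0, τ]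
  have hphase1 : u 0 + c * (τ - 0) ≤ u τ := by
    apply lin_lower hd hτ0
    intro s hs
    apply hlow
    exact ⟨h0.1.trans (hmono hs.1.le), (hbefore s hs.1.le hs.2).le⟩
  have hτbound : τ ≤ σ / c := by
    rw [le_div_iff₀ hc]
    have h1 : u τ ≤ max (u 0) (A + σ) := hτval
    have h2 : u 0 + c * τ ≤ u τ := by linarith [hphase1]
    rcases max_cases (u 0) (A + σ) with ⟨he, _⟩ | ⟨he, _⟩ <;> rw [he] at h1 <;>
      nlinarith [h0.1, hσ.le]
  -- phase 2 : speed = 1 on [τ, t]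
  have hphase2 : u τ + 1 * (t - τ) ≤ u t := by
    apply lin_lower hd hτt
    intro s hs
    refine (hmid s ⟨hτS.2.trans (hmono hs.1.le), (hhit s ⟨hτ0.trans hs.1.le, hs.2.le⟩).le⟩).ge
  have : u 0 + c * τ ≤ u τ := by linarith [hphase1]
  have hfinal : u 0 + t - τ ≤ u t := by nlinarith
  have : min (B - σ) (u 0 + t) ≤ u 0 + t := min_le_right _ _
  linarith

lemma key_forward (hd : ∀ s, HasDerivAt u (g s) s)
    {σ c : ℝ} (hσ : 0 < σ) (hσπ : σ ≤ π / 2) (hc : 0 < c) (hc1 : c ≤ 1)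
    (hg0 : ∀ s, 0 ≤ g s) (hg1 : ∀ s, g s ≤ 1)
    (hup : ∀ s, π / 2 + σ ≤ u s → g s = 0)
    (hmid : ∀ s, u s ∈ Icc (-(π / 2) + σ) (π / 2 - σ) → g s = 1)
    (hlow : ∀ s, u s ∈ Icc (-(π / 2)) (-(π / 2) + σ) → c ≤ g s)
    (h0 : u 0 ∈ Icc (-(π / 2)) (π / 2)) {t : ℝ} (ht : 0 ≤ t) :
    |u t - min (π / 2) (u 0 + t)| ≤ σ / c + σ := by
  have hmono := mono_of_hd hd hg0
  have hσc : 0 ≤ σ / c := by positivity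
  rw [abs_le]
  constructor
  · -- lower bound
    rw [neg_le, neg_sub]
    by_cases hα : u 0 ≤ π / 2 - σ
    · have hC := lemmaC hd (A := -(π/2)) (B := π/2) hσ hc hc1 hg0 hlow hmid ⟨h0.1, hα⟩ ht
      have : min (π / 2) (u 0 + t) ≤ min (π / 2 - σ) (u 0 + t) + σ := by
        rcases le_total (π / 2 - σ) (u 0 + t) with h | h
        · rw [min_eq_left h]
          exact (min_le_left _ _).trans (by linarith)
        · rw [min_eq_right h, min_eq_right (by linarith)]; linarith
      linarith
    · push_neg at hα
      have : u 0 ≤ u t := hmono ht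
      have : min (π / 2) (u 0 + t) ≤ π / 2 := min_le_left _ _
      linarith
  · -- upper bound
    have hub1 : u t ≤ u 0 + 1 * (t - 0) := lin_upper hd ht (fun s _ => hg1 s)
    have hub2 : u t ≤ π / 2 + σ := barrierUp hd hup (h0.2.trans (by linarith)) ht
    rcases le_total (π / 2) (u 0 + t) with h | h
    · rw [min_eq_left h]; linarith
    · rw [min_eq_right h]; linarith

lemma key_bound (hd : ∀ s, HasDerivAt u (g s) s)
    {σ cm cp : ℝ} (hσ : 0 < σ) (hσπ : σ ≤ π / 2)
    (hcm : 0 < cm) (hcm1 : cm ≤ 1) (hcp : 0 < cp) (hcp1 : cp ≤ 1)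
    (hg0 : ∀ s, 0 ≤ g s) (hg1 : ∀ s, g s ≤ 1)
    (hup : ∀ s, π / 2 + σ ≤ u s → g s = 0)
    (hdown : ∀ s, u s ≤ -(π / 2) - σ → g s = 0)
    (hmid : ∀ s, u s ∈ Icc (-(π / 2) + σ) (π / 2 - σ) → g s = 1)
    (hlow : ∀ s, u s ∈ Icc (-(π / 2)) (-(π / 2) + σ) → cm ≤ g s)
    (hhigh : ∀ s, u s ∈ Icc (π / 2 - σ) (π / 2) → cp ≤ g s)
    (h0 : u 0 ∈ Icc (-(π / 2)) (π / 2)) (t : ℝ) :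
    |u t - PsiLim t (u 0)| ≤ σ / cm + σ / cp + 2 * σ := by
  have hσcm : 0 ≤ σ / cm := by positivity
  have hσcp : 0 ≤ σ / cp := by positivity
  have hPsi : PsiLim t (u 0) = max (-(π / 2)) (min (π / 2) (u 0 + t)) := by
    rw [PsiLim, if_pos ⟨h0.1, h0.2⟩]
  rcases le_total 0 t with ht | ht
  · have hmax : max (-(π / 2)) (min (π / 2) (u 0 + t)) = min (π / 2) (u 0 + t) := by
      apply max_eq_right
      rcases le_total (π / 2) (u 0 + t) with h | h
      · rw [min_eq_left h]; linarith [pi_pos]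
      · rw [min_eq_right h]; linarith [h0.1]
    rw [hPsi, hmax]
    have := key_forward hd hσ hσπ hcm hcm1 hg0 hg1 hup hmid hlow h0 ht
    linarith [abs_le.1 this]
  · -- reflect
    set v : ℝ → ℝ := fun x => -u (-x) with hv
    have hdv : ∀ s, HasDerivAt v (g (-s)) s := hd_reflect hd
    have hv0 : v 0 ∈ Icc (-(π / 2)) (π / 2) := by
      simp only [hv, neg_zero]
      exact ⟨by linarith [h0.2], by linarith [h0.1]⟩
    have hkey := key_forward (g := fun s => g (-s)) hdv hσ hσπ hcp hcp1
      (fun s => hg0 (-s)) (fun s => hg1 (-s))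
      (fun s hs => hdown (-s) (by simp only [hv] at hs; linarith))
      (fun s hs => hmid (-s) ⟨by simp only [hv] at hs; linarith [hs.2],
        by simp only [hv] at hs; linarith [hs.1]⟩)
      (fun s hs => hhigh (-s) ⟨by simp only [hv] at hs; linarith [hs.2],
        by simp only [hv] at hs; linarith [hs.1]⟩)
      hv0 (t := -t) (by linarith)
    have hveq : v (-t) = -u t := by simp [hv]
    have hv0eq : v 0 = -u 0 := by simp [hv]
    rw [hveq, hv0eq] at hkey
    have hmax : max (-(π / 2)) (min (π / 2) (u 0 + t)) = max (-(π / 2)) (u 0 + t) := by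
      rw [min_eq_right (by linarith [h0.2])]
    have hminmax : min (π / 2) (-(u 0) + -t) = -max (-(π / 2)) (u 0 + t) := by
      rcases le_total (-(π/2)) (u 0 + t) with h | h
      · rw [max_eq_right h, min_eq_right (by linarith)]; ring
      · rw [max_eq_left h, min_eq_left (by linarith), neg_neg]
    rw [hminmax] at hkey
    rw [hPsi, hmax]
    have heq : -u t - -max (-(π / 2)) (u 0 + t) = -(u t - max (-(π / 2)) (u 0 + t)) := by ring
    rw [heq, abs_neg] at hkey
    linarith

lemma stuckAbove (hd : ∀ s, HasDerivAt u (g s) s) {b : ℝ}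
    (hg : ∀ s, b ≤ u s → g s = 0) (h0 : b < u 0) {t : ℝ} (ht : 0 ≤ t) : u t = u 0 := by
  have hdw : ∀ s, HasDerivAt (fun x => -u x) (-g s) s := fun s => (hd s).neg
  have := stuckBelow hdw (b := -b)
    (fun s hs => by rw [hg s (by simpa using neg_le_neg hs)]; ring)
    (by simpa using neg_lt_neg h0) ht
  simpa using this

end ODElemmas

section HepsLemmas

lemma sigma_pos {ε : ℝ} (hε : ε ∈ Ioo (0:ℝ) 1) : 0 < sigmaScale ε := by
  have h : Real.log ε < 0 := Real.log_neg hε.1 hε.2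
  have h2 : 0 < |Real.log ε| := abs_pos.2 (ne_of_lt h)
  rw [sigmaScale]
  positivity

lemma sigma_tendsto : Tendsto sigmaScale (nhdsWithin 0 (Ioo (0:ℝ) 1)) (nhds 0) := by
  have h1 : Tendsto Real.log (nhdsWithin 0 (Ioo (0:ℝ) 1)) atBot :=
    Real.tendsto_log_nhdsGT_zero.mono_left
      (nhdsWithin_mono _ (fun x hx => hx.1))
  have h2 : Tendsto (fun ε => |Real.log ε|) (nhdsWithin 0 (Ioo (0:ℝ) 1)) atTop :=
    tendsto_abs_atBot_atTop.comp h1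
  have h3 := tendsto_inv_atTop_zero.comp h2
  exact h3.congr (fun x => by simp [sigmaScale, one_div, Function.comp])

section HepsFacts
variable {ρ : ℝ → ℝ} {ε : ℝ}
variable (hcont : Continuous ρ) (hnn : ∀ x, 0 ≤ ρ x)
  (hsupp : Function.support ρ ⊆ Icc (-1) 1) (hε : ε ∈ Ioo (0:ℝ) 1)
include hcont hnn hsupp hε

lemma mollifier_integrable :
    Integrable (fun s => (sigmaScale ε)⁻¹ * ρ (s / sigmaScale ε)) := by
  have hσ := sigma_pos hε
  have hc : Continuous (fun s => (sigmaScale ε)⁻¹ * ρ (s / sigmaScale ε)) :=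
    continuous_const.mul (hcont.comp (continuous_id.div_const _))
  have hcs : HasCompactSupport (fun s => (sigmaScale ε)⁻¹ * ρ (s / sigmaScale ε)) := by
    apply HasCompactSupport.intro (isCompact_Icc (a := -(sigmaScale ε)) (b := sigmaScale ε))
    intro x hx
    have : ρ (x / sigmaScale ε) = 0 := by
      by_contra h
      have := hsupp (Function.mem_support.2 h)
      simp only [mem_Icc] at this hx
      push_neg at hx
      rcases le_or_gt (-(sigmaScale ε)) x with h1 | h1
      · have h2 := hx h1
        have : x / sigmaScale ε ≤ 1 := this.2
        rw [div_le_one hσ] at this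
        linarith
      · have : -1 ≤ x / sigmaScale ε := this.1
        rw [le_div_iff₀ hσ] at this
        linarith
    simp [this]
  exact hc.integrable_of_hasCompactSupport hcs

lemma mollifier_total (hint : ∫ x, ρ x = 1) :
    ∫ s, (sigmaScale ε)⁻¹ * ρ (s / sigmaScale ε) = 1 := by
  have hσ := sigma_pos hε
  rw [MeasureTheory.integral_const_mul]
  rw [MeasureTheory.Measure.integral_comp_div ρ (sigmaScale ε)]
  rw [hint, abs_of_pos hσ]
  simp [ne_of_gt hσ]

lemma Heps_nonneg (x : ℝ) : 0 ≤ Heps ρ ε x := by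
  apply MeasureTheory.setIntegral_nonneg measurableSet_Iic
  intro s _
  have hσ := sigma_pos hε
  have := hnn (s / sigmaScale ε)
  positivity

lemma Heps_le_one (hint : ∫ x, ρ x = 1) (x : ℝ) : Heps ρ ε x ≤ 1 := by
  rw [← mollifier_total hcont hnn hsupp hε hint, Heps]
  apply MeasureTheory.setIntegral_le_integral (mollifier_integrable hcont hnn hsupp hε)
  filter_upwards with s
  have hσ := sigma_pos hε
  have := hnn (s / sigmaScale ε)
  positivity

lemma Heps_mono : Monotone (Heps ρ ε) := by
  intro x y hxy
  apply MeasureTheory.setIntegral_mono_set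
    ((mollifier_integrable hcont hnn hsupp hε).integrableOn)
  · filter_upwards with s
    have hσ := sigma_pos hε
    have := hnn (s / sigmaScale ε)
    positivity
  · exact HasSubset.Subset.eventuallyLE (Iic_subset_Iic.2 hxy)

lemma Heps_zero {x : ℝ} (hx : x ≤ -(sigmaScale ε)) : Heps ρ ε x = 0 := by
  have hσ := sigma_pos hε
  rw [Heps]
  have hae : ∀ᵐ s : ℝ, s ∈ Iic x → (sigmaScale ε)⁻¹ * ρ (s / sigmaScale ε) = 0 := by
    rw [MeasureTheory.ae_iff]
    apply measure_mono_null (t := {-(sigmaScale ε)}) ?_ (measure_singleton _)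
    intro s hs
    simp only [Classical.not_imp, mem_setOf_eq, mem_Iic] at hs
    obtain ⟨hs1, hs2⟩ := hs
    have hρ : ρ (s / sigmaScale ε) ≠ 0 := by
      intro h
      exact hs2 (by rw [h, mul_zero])
    have hmem := hsupp (Function.mem_support.2 hρ)
    simp only [mem_Icc] at hmem
    have h1 : -1 ≤ s / sigmaScale ε := hmem.1
    rw [le_div_iff₀ hσ] at h1
    have h2 : s ≤ -(sigmaScale ε) := le_trans hs1 hx
    simp only [mem_singleton_iff]
    apply le_antisymm h2
    linarith
  exact MeasureTheory.integral_eq_zero_of_ae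
    ((MeasureTheory.ae_restrict_iff' measurableSet_Iic).2 hae)

lemma Heps_one (hint : ∫ x, ρ x = 1) {x : ℝ} (hx : sigmaScale ε ≤ x) : Heps ρ ε x = 1 := by
  have hσ := sigma_pos hε
  have hInt := mollifier_integrable hcont hnn hsupp hε
  have hsplit := MeasureTheory.integral_add_compl (measurableSet_Iic (a := x)) hInt
  rw [compl_Iic] at hsplit
  have hIoi : ∫ s in Ioi x, (sigmaScale ε)⁻¹ * ρ (s / sigmaScale ε) = 0 := by
    apply MeasureTheory.setIntegral_eq_zero_of_forall_eq_zero
    intro s hs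
    rw [mem_Ioi] at hs
    have hρ : ρ (s / sigmaScale ε) = 0 := by
      by_contra h
      have hmem := hsupp (Function.mem_support.2 h)
      simp only [mem_Icc] at hmem
      have : s / sigmaScale ε ≤ 1 := hmem.2
      rw [div_le_one hσ] at this
      linarith
    rw [hρ, mul_zero]
  rw [hIoi, add_zero] at hsplit
  rw [Heps, hsplit]
  exact mollifier_total hcont hnn hsupp hε hint

end HepsFacts

end HepsLemmas

end Helpers

/-- The counterexample of Section 4 to Marsden's Theorem 6.2: (a) the smooth
flows `γ_ε^α` of the regularized vector field converge pointwise to `Ψ`, and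
(b) `Ψ(π, Ψ(-π, α)) = π/2 ≠ α` for `α ∈ [-π/2, π/2)`, so the limiting map `Ψ`
fails the flow property on a set of positive measure. -/
theorem stmt_6 (ρ : ℝ → ℝ) (hρsmooth : ContDiff ℝ (⊤ : ℕ∞) ρ)
    (hρcpt : HasCompactSupport ρ) (hρnonneg : ∀ x, 0 ≤ ρ x)
    (hρsupp : Function.support ρ ⊆ Icc (-1) 1) (hρint : ∫ x, ρ x = 1)
    (γminus γplus : ℝ) (hγm : 0 < γminus) (hγmp : γminus ≤ γplus) (hγp : γplus < 1)
    (hH0 : ∀ ε ∈ Ioo (0:ℝ) 1, γminus ≤ Heps ρ ε 0 ∧ Heps ρ ε 0 ≤ γplus)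
    (γ : ℝ → ℝ → ℝ → ℝ)
    (hγ0 : ∀ α ∈ Ioc (-π) π, ∀ ε ∈ Ioo (0:ℝ) 1, γ α ε 0 = α)
    (hγ : ∀ α ∈ Ioc (-π) π, ∀ ε ∈ Ioo (0:ℝ) 1, ∀ t : ℝ, HasDerivAt (γ α ε)
      (Heps ρ ε (γ α ε t + π / 2) - Heps ρ ε (γ α ε t - π / 2)) t) :
    (∀ α ∈ Ioc (-π) π, ∀ t : ℝ, Tendsto (fun ε => γ α ε t)
      (nhdsWithin 0 (Ioo (0:ℝ) 1)) (nhds (PsiLim t α))) ∧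
    (∀ α ∈ Icc (-(π / 2)) (π / 2), PsiLim π (PsiLim (-π) α) = π / 2) ∧
    (∀ α ∈ Ico (-(π / 2)) (π / 2), PsiLim π (PsiLim (-π) α) ≠ α) := by
  have hπ := pi_pos
  have hcont : Continuous ρ := hρsmooth.continuous
  -- part (b)
  have partb : ∀ α ∈ Icc (-(π / 2)) (π / 2), PsiLim π (PsiLim (-π) α) = π / 2 := by
    intro α hα
    have h1 : PsiLim (-π) α = -(π / 2) := by
      rw [PsiLim, if_pos ⟨hα.1, hα.2⟩]
      rw [min_eq_right (by linarith [hα.2]), max_eq_left (by linarith [hα.2])]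
    rw [h1, PsiLim, if_pos ⟨le_refl _, by linarith⟩]
    rw [min_eq_right (by linarith), max_eq_right (by linarith)]
    linarith
  refine ⟨?_, partb, ?_⟩
  swap
  · intro α hα
    rw [partb α ⟨hα.1, hα.2.le⟩]
    exact ne_of_gt hα.2
  -- part (a)
  intro α hα t
  set F := nhdsWithin (0:ℝ) (Ioo (0:ℝ) 1) with hF
  by_cases hin : -(π / 2) ≤ α ∧ α ≤ π / 2
  · -- inner initial datum
    set Kc : ℝ := 1 / γminus + 1 / (1 - γplus) + 2 with hKc
    have key : ∀ᶠ ε in F, |γ α ε t - PsiLim t α| ≤ Kc * sigmaScale ε := by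
      filter_upwards [self_mem_nhdsWithin,
        sigma_tendsto.eventually_lt_const (by linarith : (0:ℝ) < π / 2)] with ε hε hσπ
      set σ := sigmaScale ε with hσdef
      have hσ : 0 < σ := sigma_pos hε
      have hd := hγ α hα ε hε
      have hu0 : γ α ε 0 = α := hγ0 α hα ε hε
      set u := γ α ε with hu
      set g : ℝ → ℝ := fun s => Heps ρ ε (u s + π / 2) - Heps ρ ε (u s - π / 2) with hg
      have Hmono := Heps_mono hcont hρnonneg hρsupp hε
      have Hnn := Heps_nonneg hcont hρnonneg hρsupp hε
      have Hle1 := Heps_le_one hcont hρnonneg hρsupp hε hρint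
      have Hzero := fun {x} hx => Heps_zero hcont hρnonneg hρsupp hε (x := x) hx
      have Hone := fun {x} hx => Heps_one hcont hρnonneg hρsupp hε hρint (x := x) hx
      have hH0ε := hH0 ε hε
      have hg0 : ∀ s, 0 ≤ g s := fun s => sub_nonneg.2 (Hmono (by linarith))
      have hg1 : ∀ s, g s ≤ 1 := fun s => by
        have := Hle1 (u s + π / 2); have := Hnn (u s - π / 2)
        simp only [hg]; linarith
      have hup : ∀ s, π / 2 + σ ≤ u s → g s = 0 := by
        intro s hs
        have h1 : Heps ρ ε (u s + π / 2) = 1 := Hone (by linarith)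
        have h2 : Heps ρ ε (u s - π / 2) = 1 := Hone (by linarith)
        simp only [hg, h1, h2, sub_self]
      have hdown : ∀ s, u s ≤ -(π / 2) - σ → g s = 0 := by
        intro s hs
        have h1 : Heps ρ ε (u s + π / 2) = 0 := Hzero (by linarith)
        have h2 : Heps ρ ε (u s - π / 2) = 0 := Hzero (by linarith)
        simp only [hg, h1, h2, sub_self]
      have hmid : ∀ s, u s ∈ Icc (-(π / 2) + σ) (π / 2 - σ) → g s = 1 := by
        intro s hs
        have h1 : Heps ρ ε (u s + π / 2) = 1 := Hone (by linarith [hs.1])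
        have h2 : Heps ρ ε (u s - π / 2) = 0 := Hzero (by linarith [hs.2])
        simp only [hg, h1, h2, sub_zero]
      have hlow : ∀ s, u s ∈ Icc (-(π / 2)) (-(π / 2) + σ) → γminus ≤ g s := by
        intro s hs
        have h1 : γminus ≤ Heps ρ ε (u s + π / 2) :=
          le_trans hH0ε.1 (Hmono (by linarith [hs.1]))
        have h2 : Heps ρ ε (u s - π / 2) = 0 := Hzero (by linarith [hs.2])
        simp only [hg, h2, sub_zero]; exact h1
      have hhigh : ∀ s, u s ∈ Icc (π / 2 - σ) (π / 2) → 1 - γplus ≤ g s := by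
        intro s hs
        have h1 : Heps ρ ε (u s + π / 2) = 1 := Hone (by linarith [hs.1])
        have h2 : Heps ρ ε (u s - π / 2) ≤ γplus :=
          le_trans (Hmono (by linarith [hs.2])) hH0ε.2
        simp only [hg, h1]; linarith
      have h0 : u 0 ∈ Icc (-(π / 2)) (π / 2) := by rw [hu0]; exact ⟨hin.1, hin.2⟩
      have hkb := key_bound hd hσ hσπ.le hγm (by linarith) (by linarith : 0 < 1 - γplus)
        (by linarith) hg0 hg1 hup hdown hmid hlow hhigh h0 t
      rw [hu0] at hkb
      have : σ / γminus + σ / (1 - γplus) + 2 * σ = Kc * σ := by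
        rw [hKc]; field_simp
      rw [this] at hkb
      exact hkb
    have hKσ : Tendsto (fun ε => Kc * sigmaScale ε) F (nhds 0) := by
      have h := sigma_tendsto.const_mul Kc
      rw [mul_zero] at h
      exact h
    have habs : Tendsto (fun ε => |γ α ε t - PsiLim t α|) F (nhds 0) :=
      tendsto_of_tendsto_of_tendsto_of_le_of_le' tendsto_const_nhds hKσ
        (Eventually.of_forall fun ε => abs_nonneg _) key
    rw [tendsto_iff_dist_tendsto_zero]
    simpa only [Real.dist_eq] using habs
  · -- outer initial datum : the solution is eventually constant
    have hPsi : PsiLim t α = α := by rw [PsiLim, if_neg hin]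
    rw [hPsi]
    push_neg at hin
    have hout : α < -(π / 2) ∨ π / 2 < α := by
      rcases le_or_gt (-(π / 2)) α with h | h
      · exact Or.inr (hin h)
      · exact Or.inl h
    have hd0 : 0 < (if α < -(π / 2) then -(π / 2) - α else α - π / 2) := by
      rcases hout with h | h
      · rw [if_pos h]; linarith
      · rw [if_neg (by linarith)]; linarith
    have hconst : ∀ᶠ ε in F, γ α ε t = α := by
      filter_upwards [self_mem_nhdsWithin,
        sigma_tendsto.eventually_lt_const hd0] with ε hε hσd
      set σ := sigmaScale ε with hσdef
      have hσ : 0 < σ := sigma_pos hε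
      have hd := hγ α hα ε hε
      have hu0 : γ α ε 0 = α := hγ0 α hα ε hε
      set u := γ α ε with hu
      set g : ℝ → ℝ := fun s => Heps ρ ε (u s + π / 2) - Heps ρ ε (u s - π / 2) with hg
      have Hzero := fun {x} hx => Heps_zero hcont hρnonneg hρsupp hε (x := x) hx
      have Hone := fun {x} hx => Heps_one hcont hρnonneg hρsupp hε hρint (x := x) hx
      have hup : ∀ s, π / 2 + σ ≤ u s → g s = 0 := by
        intro s hs
        have h1 : Heps ρ ε (u s + π / 2) = 1 := Hone (by linarith)
        have h2 : Heps ρ ε (u s - π / 2) = 1 := Hone (by linarith)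
        simp only [hg, h1, h2, sub_self]
      have hdown : ∀ s, u s ≤ -(π / 2) - σ → g s = 0 := by
        intro s hs
        have h1 : Heps ρ ε (u s + π / 2) = 0 := Hzero (by linarith)
        have h2 : Heps ρ ε (u s - π / 2) = 0 := Hzero (by linarith)
        simp only [hg, h1, h2, sub_self]
      rcases hout with hcase | hcase
      · -- α < -π/2
        rw [if_pos hcase] at hσd
        rcases le_total 0 t with ht | ht
        · rw [← hu0]
          exact stuckBelow hd (b := -(π / 2) - σ) hdown (by rw [hu0]; linarith) ht
        · -- backward : reflect
          have hdv := hd_reflect hd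
          have := stuckAbove hdv (b := π / 2 + σ)
            (fun s hs => hdown (-s) (by linarith)) (by simp [hu0]; linarith)
            (t := -t) (by linarith)
          simp only [neg_neg, neg_zero] at this
          rw [hu0] at this
          linarith [this]
      · -- α > π/2
        rw [if_neg (by linarith)] at hσd
        rcases le_total 0 t with ht | ht
        · rw [← hu0]
          exact stuckAbove hd (b := π / 2 + σ) hup (by rw [hu0]; linarith) ht
        · have hdv := hd_reflect hd
          have := stuckBelow hdv (b := -(π / 2) - σ)
            (fun s hs => hup (-s) (by linarith)) (by simp [hu0]; linarith)
            (t := -t) (by linarith)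
          simp only [neg_neg, neg_zero] at this
          rw [hu0] at this
          linarith [this]
    exact Tendsto.congr' (hconst.mono fun ε h => h.symm) tendsto_const_nhds
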